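/- arXiv:2603.05292 — 2 statements merged into one kernel-verified Lean document; each statement's English description precedes it below -/
import Mathlib

section
/- Let M be a matroid with ground set [m] and let u ∈ ℤ^m with Σ_{j=1}^m u_j = 1. Define A(u) = { i ∈ [m] : for every subset S ⊆ [m], Σ_{j∈S} u_j ≤ 1 if i ∈ cl_M(S) and Σ_{j∈S} u_j ≤ 0 if i ∉ cl_M(S) }. Then rk_M(A(u)) = 1 if u = e_i for some non-loop i of M, and rk_M(A(u)) = 0 otherwise. -/
open scoped Classical

/-- The rank of a set `X` in a matroid `M`: the largest cardinality of an
independent subset of `X`. -/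
noncomputable def matroidRk {α : Type*} (M : Matroid α) (X : Set α) : ℕ :=
  sSup {n : ℕ | ∃ I, M.Indep I ∧ I ⊆ X ∧ I.ncard = n}

/-- The set `A(u) = {i : u ∈ P_i}` of global sections data: those `i ∈ [m]` such that
for every subset `S ⊆ [m]`, `∑_{j∈S} u_j ≤ 1` if `i ∈ cl_M(S)` and `∑_{j∈S} u_j ≤ 0`
if `i ∉ cl_M(S)`. -/
def Aglobal (m : ℕ) (M : Matroid (Fin m)) (u : Fin m → ℤ) : Set (Fin m) :=
  {i | ∀ S : Finset (Fin m),
    if i ∈ M.closure (S : Set (Fin m)) then (∑ j ∈ S, u j) ≤ 1 else (∑ j ∈ S, u j) ≤ 0}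

/-- The standard basis vector `e_i ∈ ℤ^m`. -/
def stdVec (m : ℕ) (i : Fin m) : Fin m → ℤ := fun j => if j = i then 1 else 0

/-! Every element of `A(u)` forces all partial sums of `u` to be at most `1`. Together with
`∑ u = 1` this makes `u` a standard basis vector `e_i`: the complementary sums give `u ≥ 0`, and
comparing the sum over `{i, k}` with `u_i = 1` gives `u_k = 0`. Finally `A(e_i) = cl_M {i}`, whose
rank is `1` or `0` according as `i` is a non-loop or a loop. -/

open Finset

theorem exists_eq_single_of_sum_eq_one {ι : Type*} [Fintype ι] [DecidableEq ι] {u : ι → ℤ}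
    (hu : ∑ j, u j = 1) (hle : ∀ S : Finset ι, ∑ j ∈ S, u j ≤ 1) : ∃ i, u = Pi.single i 1 := by
  have hnonneg (k : ι) : 0 ≤ u k := by
    have hcompl := hle (univ.erase k)
    rw [← add_sum_erase _ _ (mem_univ k)] at hu
    omega
  obtain ⟨i, -, hi⟩ := exists_ne_zero_of_sum_ne_zero (hu.trans_ne one_ne_zero)
  have hui : u i = 1 := by
    have hsingle := hle {i}
    rw [sum_singleton] at hsingle
    have := hnonneg i
    omega
  refine ⟨i, funext fun k => ?_⟩
  rcases eq_or_ne k i with rfl | hki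
  · simpa using hui
  · have hpair := hle {i, k}
    rw [sum_pair hki.symm] at hpair
    have := hnonneg k
    simp only [Pi.single_apply, hki, if_false]
    omega

theorem matroidRk_eq_eRk {α : Type*} (M : Matroid α) [M.RankFinite] (X : Set α) :
    (matroidRk M X : ℕ∞) = M.eRk X := by
  obtain ⟨I, hI⟩ := M.exists_isBasis' X
  have hmax : IsGreatest {n : ℕ | ∃ I, M.Indep I ∧ I ⊆ X ∧ I.ncard = n} I.ncard := by
    refine ⟨⟨I, hI.indep, hI.subset, rfl⟩, ?_⟩
    rintro _ ⟨J, hJ, hJX, rfl⟩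
    rw [← ENat.natCast_le_natCast, hJ.finite.cast_ncard_eq, hI.indep.finite.cast_ncard_eq,
      hI.encard_eq_eRk]
    exact hJ.encard_le_eRk_of_subset hJX
  rw [matroidRk, hmax.csSup_eq, hI.indep.finite.cast_ncard_eq, hI.encard_eq_eRk]

theorem stdVec_eq_single (m : ℕ) (i : Fin m) : stdVec m i = Pi.single i 1 :=
  funext fun j => (Pi.single_apply i 1 j).symm

theorem Aglobal_stdVec (m : ℕ) (M : Matroid (Fin m)) (i : Fin m) :
    Aglobal m M (stdVec m i) = M.closure {i} := by
  ext j
  simp only [Aglobal, Set.mem_ofPred_eq, stdVec_eq_single, sum_pi_single']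
  refine ⟨fun hj => ?_, fun hj S => ?_⟩
  · by_contra hji
    simpa [hji] using hj {i}
  · by_cases hiS : i ∈ S
    · simp [hiS, M.closure_subset_closure (Set.singleton_subset_iff.2 hiS) hj]
    · split_ifs <;> simp

theorem exists_eq_stdVec_of_mem_Aglobal {m : ℕ} {M : Matroid (Fin m)} {u : Fin m → ℤ}
    (hu : ∑ j, u j = 1) {j : Fin m} (hj : j ∈ Aglobal m M u) : ∃ i, u = stdVec m i := by
  simp_rw [stdVec_eq_single]
  refine exists_eq_single_of_sum_eq_one hu fun S => ?_
  have hS := hj S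
  split_ifs at hS <;> omega

/-- `h⁰(X_m, E_M)_u = rk_M(A(u))` equals `1` if `u = e_i` for some non-loop `i` of
`M`, and `0` otherwise. -/
theorem h0_tautological_bundle (m : ℕ) (M : Matroid (Fin m)) (hE : M.E = Set.univ)
    (u : Fin m → ℤ) (hu : ∑ j, u j = 1) :
    matroidRk M (Aglobal m M u) =
      (if ∃ i : Fin m, i ∉ M.closure ∅ ∧ u = stdVec m i then 1 else 0) := by
  rw [← ENat.natCast_inj, matroidRk_eq_eRk]
  split_ifs with h
  · obtain ⟨i, hi, rfl⟩ := h
    rw [Aglobal_stdVec, Matroid.eRk_closure_eq, Matroid.IsNonloop.eRk_eq ⟨hi, by simp [hE]⟩]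
    rfl
  · rw [ENat.natCast_zero, Matroid.eRk_eq_zero_iff']
    rintro j ⟨hj, -⟩
    obtain ⟨i, rfl⟩ := exists_eq_stdVec_of_mem_Aglobal hu hj
    have hi : i ∈ M.closure ∅ := by_contra fun hi => h ⟨i, hi, rfl⟩
    rw [Aglobal_stdVec] at hj
    exact M.closure_subset_closure_of_subset_closure (Set.singleton_subset_iff.2 hi) hj
end

section
/- Let M be a matroid with ground set [m] and let u ∈ ℤ^m with Σ_{j=1}^m u_j = 1. Then Σ_π (−1)^{m − l(π)} · rk_M(A_π(u)), the sum over all flags π of subsets of [m], equals Σ_S Σ_{π ∈ Π_u(S)} (−1)^{m − l(π)} · rk_M(S), where the outer sum on the right-hand side is over all nonempty subsets S ⊆ [m] with Σ_{j∈S} u_j = 1. -/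
open scoped Classical

/-- A flag of subsets of `[m]`: a finite set of nonempty subsets of `Fin m`, totally
ordered by inclusion, containing the full set `[m]`.  Its length is `π.card`. -/
def IsFlag (m : ℕ) (π : Finset (Finset (Fin m))) : Prop :=
  (∀ S ∈ π, S.Nonempty) ∧ Finset.univ ∈ π ∧ ∀ S ∈ π, ∀ T ∈ π, S ⊆ T ∨ T ⊆ S

/-- The weight-`u` space of sections `H⁰(U_σ, E_M)_u = A_π(u)` for the flag `π`. -/
def Aflag (m : ℕ) (M : Matroid (Fin m)) (u : Fin m → ℤ) (π : Finset (Finset (Fin m))) :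
    Set (Fin m) :=
  {i | ∀ S ∈ π,
    if i ∈ M.closure (S : Set (Fin m)) then (∑ j ∈ S, u j) ≤ 1 else (∑ j ∈ S, u j) ≤ 0}

/-- `π ∈ Π_u(S)`: `π` is a flag containing `S`, all of whose members have `u`-sum
`≤ 1`, and `S` is the first member of `π` with `u`-sum equal to `1` (members strictly
below `S` have `u`-sum `≤ 0`). -/
def memPi (m : ℕ) (u : Fin m → ℤ) (S : Finset (Fin m)) (π : Finset (Finset (Fin m))) :
    Prop :=
  IsFlag m π ∧ S ∈ π ∧ (∀ T ∈ π, (∑ j ∈ T, u j) ≤ 1) ∧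
    ∀ T ∈ π, T ⊂ S → (∑ j ∈ T, u j) ≤ 0

/-!
If some member of a flag `π` has `u`-sum at least `2`, no `i` passes the test at that member,
so `A_π(u) = ∅` and `π` contributes nothing; such a flag also lies in no `Π_u(S)`.
Otherwise, since `[m] ∈ π` has `u`-sum `1`, there is a first member `S` of `π` with `u`-sum `1`;
then `A_π(u) = cl_M(S)`, whose rank is `rk_M(S)`, and `π ∈ Π_u(S)` for this `S` only.
Grouping the flags by `S` gives the double sum.
-/

section MatroidRank

variable {α : Type*} [Finite α]

lemma Matroid.IsBasis'.matroidRk_eq {M : Matroid α} {I X : Set α} (hI : M.IsBasis' I X) :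
    matroidRk M X = I.ncard := by
  have hbound : ∀ n ∈ {n : ℕ | ∃ J, M.Indep J ∧ J ⊆ X ∧ J.ncard = n}, n ≤ I.ncard := by
    rintro n ⟨J, hJ, hJX, rfl⟩
    obtain ⟨K, hK, hJK⟩ := hJ.subset_isBasis'_of_subset hJX
    calc J.ncard ≤ K.ncard := Set.ncard_le_ncard hJK
      _ = I.ncard := by rw [Set.ncard_def, Set.ncard_def, hK.encard_eq_encard hI]
  have hmem : I.ncard ∈ {n : ℕ | ∃ J, M.Indep J ∧ J ⊆ X ∧ J.ncard = n} :=
    ⟨I, hI.indep, hI.subset, rfl⟩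
  exact le_antisymm (csSup_le ⟨_, hmem⟩ hbound) (le_csSup ⟨_, hbound⟩ hmem)

lemma matroidRk_closure (M : Matroid α) (X : Set α) :
    matroidRk M (M.closure X) = matroidRk M X := by
  obtain ⟨I, hI⟩ := M.exists_isBasis' X
  rw [hI.matroidRk_eq, hI.isBasis_closure_right.isBasis'.matroidRk_eq]

lemma matroidRk_empty (M : Matroid α) : matroidRk M ∅ = 0 := by
  rw [M.empty_indep.isBasis_self.isBasis'.matroidRk_eq, Set.ncard_empty]

end MatroidRank

section Flags

variable {m : ℕ} {u : Fin m → ℤ} {π : Finset (Finset (Fin m))}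

lemma Aflag_eq_empty_of_one_lt_sum (M : Matroid (Fin m)) {T : Finset (Fin m)} (hT : T ∈ π)
    (hT2 : 1 < ∑ j ∈ T, u j) : Aflag m M u π = ∅ := by
  refine Set.eq_empty_iff_forall_notMem.2 fun i hi => ?_
  have := hi T hT
  split_ifs at this <;> omega

lemma memPi.unique {S S' : Finset (Fin m)} (hS : memPi m u S π) (hS' : memPi m u S' π)
    (hS1 : ∑ j ∈ S, u j = 1) (hS'1 : ∑ j ∈ S', u j = 1) : S = S' := by
  by_contra hne
  rcases hS.1.2.2 S hS.2.1 S' hS'.2.1 with h | h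
  · have := hS'.2.2.2 S hS.2.1 (h.ssubset_of_ne hne)
    omega
  · have := hS.2.2.2 S' hS'.2.1 (h.ssubset_of_ne (Ne.symm hne))
    omega

lemma exists_memPi_of_sum_le_one (hu : ∑ j, u j = 1) (hπ : IsFlag m π)
    (hle : ∀ T ∈ π, ∑ j ∈ T, u j ≤ 1) : ∃ S, ∑ j ∈ S, u j = 1 ∧ memPi m u S π := by
  obtain ⟨S, hS⟩ := exists_minimal_of_wellFoundedLT
    (fun T : Finset (Fin m) => T ∈ π ∧ ∑ j ∈ T, u j = 1) ⟨Finset.univ, hπ.2.1, hu⟩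
  refine ⟨S, hS.prop.2, hπ, hS.prop.1, hle, fun T hT hTS => ?_⟩
  have hT1 : ∑ j ∈ T, u j ≠ 1 := fun h => hS.not_prop_of_lt hTS ⟨hT, h⟩
  have := hle T hT
  omega

lemma Aflag_eq_closure (M : Matroid (Fin m)) {S : Finset (Fin m)} (hS : memPi m u S π)
    (hS1 : ∑ j ∈ S, u j = 1) : Aflag m M u π = M.closure S := by
  obtain ⟨hπ, hSπ, hle, hbelow⟩ := hS
  ext i
  refine ⟨fun hi => ?_, fun hi T hT => ?_⟩
  · have := hi S hSπ
    split_ifs at this with h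
    · exact h
    · omega
  · split_ifs with hiT
    · exact hle T hT
    · rcases hπ.2.2 S hSπ T hT with hST | hTS
      · exact absurd (M.closure_subset_closure (by exact_mod_cast hST) hi) hiT
      · rcases hTS.ssubset_or_eq with hTS | rfl
        · exact hbelow T hT hTS
        · exact absurd hi hiT

lemma matroidRk_Aflag_eq_sum (M : Matroid (Fin m)) (hu : ∑ j, u j = 1) (hπ : IsFlag m π) :
    matroidRk M (Aflag m M u π) =
      ∑ S ∈ Finset.univ.filter (fun S : Finset (Fin m) => S.Nonempty ∧ ∑ j ∈ S, u j = 1),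
        if memPi m u S π then matroidRk M (S : Set (Fin m)) else 0 := by
  by_cases hle : ∀ T ∈ π, ∑ j ∈ T, u j ≤ 1
  · obtain ⟨S, hS1, hS⟩ := exists_memPi_of_sum_le_one hu hπ hle
    have hSF : S ∈ Finset.univ.filter
        (fun S : Finset (Fin m) => S.Nonempty ∧ ∑ j ∈ S, u j = 1) := by
      simpa using ⟨hπ.1 S hS.2.1, hS1⟩
    rw [Aflag_eq_closure M hS hS1, matroidRk_closure, Finset.sum_eq_single_of_mem S hSF,
      if_pos hS]
    intro S' hS'F hne
    rw [if_neg fun hS' => hne (hS'.unique hS (Finset.mem_filter.1 hS'F).2.2 hS1)]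
  · obtain ⟨T, hT, hT2⟩ : ∃ T ∈ π, 1 < ∑ j ∈ T, u j := by simpa using hle
    rw [Aflag_eq_empty_of_one_lt_sum M hT hT2, matroidRk_empty]
    refine (Finset.sum_eq_zero fun S _ => if_neg fun hS => ?_).symm
    exact absurd (hS.2.2.1 T hT) (not_le.2 hT2)

end Flags

theorem euler_char_as_double_sum_general (m : ℕ) (M : Matroid (Fin m))
    (u : Fin m → ℤ) (hu : ∑ j, u j = 1) :
    ∑ π ∈ Finset.univ.filter (IsFlag m),
        (-1 : ℤ) ^ (m - π.card) * (matroidRk M (Aflag m M u π) : ℤ)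
      = ∑ S ∈ Finset.univ.filter
            (fun S : Finset (Fin m) => S.Nonempty ∧ (∑ j ∈ S, u j) = 1),
          ∑ π ∈ Finset.univ.filter (memPi m u S),
            (-1 : ℤ) ^ (m - π.card) * (matroidRk M (S : Set (Fin m)) : ℤ) := by
  calc _ = ∑ π ∈ Finset.univ.filter (IsFlag m),
          ∑ S ∈ Finset.univ.filter
            (fun S : Finset (Fin m) => S.Nonempty ∧ (∑ j ∈ S, u j) = 1),
            if memPi m u S π then
              (-1 : ℤ) ^ (m - π.card) * (matroidRk M (S : Set (Fin m)) : ℤ) else 0 := by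
        refine Finset.sum_congr rfl fun π hπ => ?_
        rw [matroidRk_Aflag_eq_sum M hu (Finset.mem_filter.1 hπ).2, Nat.cast_sum,
          Finset.mul_sum]
        simp only [Nat.cast_ite, Nat.cast_zero, mul_ite, mul_zero]
    _ = _ := by
        rw [Finset.sum_comm]
        refine Finset.sum_congr rfl fun S _ => ?_
        rw [← Finset.sum_filter, Finset.filter_filter]
        exact Finset.sum_congr (Finset.filter_congr fun π _ => and_iff_right_of_imp fun h => h.1)
          fun _ _ => rfl

/-- The equivariant Euler characteristic `χ(X_m, E_M)_u`, as the alternating sum of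
`rk_M(A_π(u))` over all flags `π`, equals the double sum over nonempty `S ⊆ [m]` with
`∑_{j∈S} u_j = 1` and flags `π ∈ Π_u(S)` of `(-1)^{m - l(π)} rk_M(S)`. -/
theorem euler_char_as_double_sum (m : ℕ) (M : Matroid (Fin m)) (hE : M.E = Set.univ)
    (u : Fin m → ℤ) (hu : ∑ j, u j = 1) :
    ∑ π ∈ Finset.univ.filter (IsFlag m),
        (-1 : ℤ) ^ (m - π.card) * (matroidRk M (Aflag m M u π) : ℤ)
      = ∑ S ∈ Finset.univ.filter
            (fun S : Finset (Fin m) => S.Nonempty ∧ (∑ j ∈ S, u j) = 1),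
          ∑ π ∈ Finset.univ.filter (memPi m u S),
            (-1 : ℤ) ^ (m - π.card) * (matroidRk M (S : Set (Fin m)) : ℤ) :=
  euler_char_as_double_sum_general m M u hu
end
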